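/- Let E be a real inner product space and v : Fin (n+1) → E a linearly independent family. Let S := span ℝ {v i | (i : Fin (n+1)) (h : (i : ℕ) < n)} be the span of the first n vectors and S' := span ℝ (range v) the full span. Let z ∈ E, and suppose P_S z = ∑_{i < n} ā i • v i and P_S (v n) = ∑_{i < n} b i • v i. Set k := ⟪z − P_S z, v n⟫ / ‖v n − P_S (v n)‖² (the denominator is nonzero by linear independence). Then P_{S'} z = ∑_{i < n} (ā i − k * b i) • v i + k • v n. -/

import Mathlib

/-!
Write `P` for the projection onto `K` and `e := u - P u`. Since `P u ∈ K`, the space `K ⊔ span {u}`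
is also `K ⊔ span {e}`, and `e ⟂ K`; so its projection is `P` plus the projection onto the line
through `e`, i.e. `z ↦ P z + (⟪e, z⟫ / ‖e‖²) • e`, and `⟪e, z⟫ = ⟪u, z - P z⟫` because `P` is
self-adjoint. When `u ∈ K` we get `e = 0`, and the formula stays true with the junk value `x / 0 = 0`.
-/

open scoped RealInnerProductSpace

instance spanRangeFiniteDimensional {E : Type*} [NormedAddCommGroup E]
    [InnerProductSpace ℝ E] {n : ℕ} (v : Fin n → E) :
    FiniteDimensional ℝ (Submodule.span ℝ (Set.range v)) :=
  FiniteDimensional.span_of_finite ℝ (Set.finite_range v)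

instance spanImageFiniteDimensional {E : Type*} [NormedAddCommGroup E]
    [InnerProductSpace ℝ E] {m : ℕ} (v : Fin m → E) (s : Set (Fin m)) :
    FiniteDimensional ℝ (Submodule.span ℝ (v '' s)) :=
  FiniteDimensional.span_of_finite ℝ ((Set.toFinite s).image v)

open scoped InnerProductSpace

namespace Submodule

variable {𝕜 E : Type*} [RCLike 𝕜] [NormedAddCommGroup E] [InnerProductSpace 𝕜 E]

theorem sup_span_singleton_sub_of_mem (K : Submodule 𝕜 E) {x : E} (hx : x ∈ K) (u : E) :
    K ⊔ 𝕜 ∙ (u - x) = K ⊔ 𝕜 ∙ u := by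
  have hu : u ∈ K ⊔ 𝕜 ∙ u := mem_sup_right (mem_span_singleton_self u)
  have hux : u - x ∈ K ⊔ 𝕜 ∙ (u - x) := mem_sup_right (mem_span_singleton_self _)
  refine le_antisymm (sup_le le_sup_left ?_) (sup_le le_sup_left ?_)
  · exact (span_singleton_le_iff_mem _ _).2 (sub_mem hu (mem_sup_left hx))
  · rw [span_singleton_le_iff_mem]
    simpa using add_mem hux (mem_sup_left hx)

theorem starProjection_eq_add_of_isOrtho {U V W : Submodule 𝕜 E} [U.HasOrthogonalProjection]
    [V.HasOrthogonalProjection] [W.HasOrthogonalProjection] (hUV : U ⟂ V) (hW : W = U ⊔ V)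
    (z : E) : W.starProjection z = U.starProjection z + V.starProjection z := by
  subst hW
  refine eq_starProjection_of_mem_of_inner_eq_zero
    (add_mem (mem_sup_left (starProjection_apply_mem U z))
      (mem_sup_right (starProjection_apply_mem V z))) fun w hw ↦ ?_
  rw [← inner_eq_zero_symm]
  refine (inf_orthogonal U V ▸ ?_ : z - _ ∈ (U ⊔ V)ᗮ) w hw
  refine ⟨?_, ?_⟩
  · rw [sub_add_eq_sub_sub]
    exact sub_mem (sub_starProjection_mem_orthogonal z)
      (hUV.symm.le (starProjection_apply_mem V z))
  · rw [add_comm, sub_add_eq_sub_sub]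
    exact sub_mem (sub_starProjection_mem_orthogonal z)
      (hUV.le (starProjection_apply_mem U z))

theorem starProjection_sup_span_singleton {K K' : Submodule 𝕜 E} [K.HasOrthogonalProjection]
    [K'.HasOrthogonalProjection] {u : E} (hK' : K' = K ⊔ 𝕜 ∙ u) (z : E) :
    K'.starProjection z = K.starProjection z +
      (⟪u, z - K.starProjection z⟫_𝕜 / ((‖u - K.starProjection u‖ ^ 2 : ℝ) : 𝕜)) •
        (u - K.starProjection u) := by
  set e := u - K.starProjection u
  have heK : 𝕜 ∙ e ⟂ K :=
    isOrtho_iff_le.2 <| (span_singleton_le_iff_mem _ _).2 (K.sub_starProjection_mem_orthogonal u)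
  rw [starProjection_eq_add_of_isOrtho heK.symm
    (hK'.trans (K.sup_span_singleton_sub_of_mem (K.starProjection_apply_mem u) u).symm),
    starProjection_singleton]
  congr 3
  rw [inner_sub_right, inner_sub_left, inner_starProjection_left_eq_right]

theorem span_range_fin_succ_eq_sup {R M : Type*} [Semiring R] [AddCommMonoid M] [Module R M] {n : ℕ}
    (v : Fin (n + 1) → M) :
    span R (Set.range v) = span R (v '' {i | (i : ℕ) < n}) ⊔ R ∙ v (Fin.last n) := by
  rw [← span_union]
  congr 1
  ext x
  constructor
  · rintro ⟨i, rfl⟩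
    induction i using Fin.lastCases with
    | last => exact Or.inr rfl
    | cast j => exact Or.inl ⟨j.castSucc, j.isLt, rfl⟩
  · rintro (⟨i, -, rfl⟩ | rfl) <;> exact ⟨_, rfl⟩

end Submodule

theorem stmt_17_general {E : Type*} [NormedAddCommGroup E] [InnerProductSpace ℝ E]
    {n : ℕ} (v : Fin (n + 1) → E)
    (z : E) (abar b : Fin n → ℝ) (k : ℝ)
    (hz : (Submodule.orthogonalProjection
        (Submodule.span ℝ (v '' {i : Fin (n + 1) | (i : ℕ) < n})) z : E) =
      ∑ i : Fin n, abar i • v i.castSucc)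
    (hb : (Submodule.orthogonalProjection
        (Submodule.span ℝ (v '' {i : Fin (n + 1) | (i : ℕ) < n}))
          (v (Fin.last n)) : E) =
      ∑ i : Fin n, b i • v i.castSucc)
    (hk : k =
      ⟪z - (Submodule.orthogonalProjection
          (Submodule.span ℝ (v '' {i : Fin (n + 1) | (i : ℕ) < n})) z : E),
        v (Fin.last n)⟫ /
      ‖v (Fin.last n) - (Submodule.orthogonalProjection
          (Submodule.span ℝ (v '' {i : Fin (n + 1) | (i : ℕ) < n}))
            (v (Fin.last n)) : E)‖ ^ 2) :
    (Submodule.orthogonalProjection (Submodule.span ℝ (Set.range v)) z : E) =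
      ∑ i : Fin n, (abar i - k * b i) • v i.castSucc + k • v (Fin.last n) := by
  set S := Submodule.span ℝ (v '' {i : Fin (n + 1) | (i : ℕ) < n})
  change S.starProjection z = _ at hz
  change S.starProjection (v (Fin.last n)) = _ at hb
  change k = ⟪z - S.starProjection z, _⟫ / ‖_ - S.starProjection _‖ ^ 2 at hk
  change (Submodule.span ℝ (Set.range v)).starProjection z = _
  rw [S.starProjection_sup_span_singleton (Submodule.span_range_fin_succ_eq_sup v) z,
    RCLike.ofReal_real_eq_id, id, real_inner_comm, ← hk, hz, hb]
  simp only [sub_smul, Finset.sum_sub_distrib, smul_sub, Finset.smul_sum, smul_smul]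
  abel

theorem stmt_17 {E : Type*} [NormedAddCommGroup E] [InnerProductSpace ℝ E]
    {n : ℕ} (v : Fin (n + 1) → E) (hv : LinearIndependent ℝ v)
    (z : E) (abar b : Fin n → ℝ) (k : ℝ)
    (hz : (Submodule.orthogonalProjection
        (Submodule.span ℝ (v '' {i : Fin (n + 1) | (i : ℕ) < n})) z : E) =
      ∑ i : Fin n, abar i • v i.castSucc)
    (hb : (Submodule.orthogonalProjection
        (Submodule.span ℝ (v '' {i : Fin (n + 1) | (i : ℕ) < n}))
          (v (Fin.last n)) : E) =
      ∑ i : Fin n, b i • v i.castSucc)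
    (hk : k =
      ⟪z - (Submodule.orthogonalProjection
          (Submodule.span ℝ (v '' {i : Fin (n + 1) | (i : ℕ) < n})) z : E),
        v (Fin.last n)⟫ /
      ‖v (Fin.last n) - (Submodule.orthogonalProjection
          (Submodule.span ℝ (v '' {i : Fin (n + 1) | (i : ℕ) < n}))
            (v (Fin.last n)) : E)‖ ^ 2) :
    (Submodule.orthogonalProjection (Submodule.span ℝ (Set.range v)) z : E) =
      ∑ i : Fin n, (abar i - k * b i) • v i.castSucc + k • v (Fin.last n) :=
  stmt_17_general v z abar b k hz hb hk
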